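/- arXiv:1206.3591 — 2 statements merged into one kernel-verified Lean document; each statement's English description precedes it below -/
import Mathlib

section
/- For all n ≥ c+1 ≥ 2 and all k, the graphical Stirling numbers of forests satisfy S(F^{c+1}_{n+1}, k) = S(F^c_{n+1}, k) + S(F^c_n, k), where F^c_n denotes any forest with n vertices and c components. -/
open Finset SimpleGraph Polynomial

/-- Stirling numbers of the second kind. -/
def stirling2 : ℕ → ℕ → ℕ
  | 0, 0 => 1
  | 0, _ + 1 => 0
  | _ + 1, 0 => 0
  | n + 1, k + 1 => (k + 1) * stirling2 n (k + 1) + stirling2 n k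

/-- Bell numbers. -/
def bell (n : ℕ) : ℕ := ∑ k ∈ Finset.range (n + 1), stirling2 n k

/-- `graphStirling G k` is the number of partitions of the vertex set of `G`
into exactly `k` non-empty independent sets. -/
noncomputable def graphStirling {V : Type} [Fintype V] [DecidableEq V] (G : SimpleGraph V) (k : ℕ) : ℕ :=
  Nat.card {P : Finpartition (Finset.univ : Finset V) //
    P.parts.card = k ∧ ∀ p ∈ P.parts, ∀ u ∈ p, ∀ v ∈ p, ¬ G.Adj u v}

/-- The number of proper colorings of `G` with `x` colors
(the chromatic polynomial evaluated at `x`). -/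
noncomputable def chromaticCount {V : Type} [Fintype V] (G : SimpleGraph V) (x : ℕ) : ℕ :=
  Nat.card {f : V → Fin x // ∀ u v, G.Adj u v → f u ≠ f v}

/-!
Removing a vertex `a` from a partition of `insert a s` leaves a partition `Q` of `s` together with
the part `b` that contained `a` (with `b = ∅` when `{a}` was a part), and this is a bijection.
Hence `S(G, k + 1) = S(G - a, k) + ∑ Q, #{parts of Q with no neighbour of a}`, the sum running over
the partitions of `G - a` into `k + 1` independent sets. For an isolated vertex every part
qualifies, which for the edgeless graph is the recurrence of `stirling2`; for a leaf all parts but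
the one containing its neighbour qualify, so `S(F, k + 1) = S(F - a, k) + k S(F - a, k + 1)`.
A forest with an edge has a leaf, and deleting it keeps the number of components, so `S(F, k)` is
determined by the number of components and of edges, and Pascal's rule for it follows by induction
on the number of edges.
-/

/-- `forestStirling c m k` is `S(F, k)` for a forest `F` with `c` components and `m` edges. -/
def forestStirling (c : ℕ) : ℕ → ℕ → ℕ
  | 0, k => stirling2 c k
  | _ + 1, 0 => 0
  | m + 1, k + 1 => forestStirling c m k + k * forestStirling c m (k + 1)

theorem forestStirling_pascal {c : ℕ} (hc : 0 < c) :
    ∀ m k, forestStirling (c + 1) m k = forestStirling c (m + 1) k + forestStirling c m k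
  | 0, 0 => by
    obtain ⟨c, rfl⟩ := Nat.exists_eq_add_of_lt hc
    rfl
  | 0, k + 1 => by
    simp only [forestStirling, stirling2]
    ring
  | _ + 1, 0 => rfl
  | m + 1, k + 1 => by
    simp only [forestStirling, forestStirling_pascal hc m]
    ring

namespace Finpartition

section Insert

variable {α : Type*} [DecidableEq α] {s b : Finset α} {a : α}

lemma card_filter_notMem_parts (P : Finpartition s) {u : α} (hu : u ∈ s) :
    #{b ∈ P.parts | u ∉ b} = #P.parts - 1 := by
  have : {b ∈ P.parts | u ∉ b} = P.parts.erase (P.part u) := by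
    ext b
    simp only [mem_filter, mem_erase]
    exact ⟨fun ⟨hb, hub⟩ ↦ ⟨fun h ↦ hub (h ▸ P.mem_part hu), hb⟩,
      fun ⟨hbu, hb⟩ ↦ ⟨hb, fun hub ↦ hbu (P.part_eq_of_mem hb hub).symm⟩⟩
  rw [this, card_erase_of_mem (P.part_mem.2 hu)]

lemma subset_of_mem_insert_empty {P : Finpartition s} (hb : b ∈ insert ∅ P.parts) : b ⊆ s := by
  rcases mem_insert.1 hb with rfl | hb
  exacts [empty_subset s, P.le hb]

lemma disjoint_of_mem_insert_empty {P : Finpartition s} {d : Finset α} (hd : d ∈ P.parts)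
    (hb : b ∈ insert ∅ P.parts) (hdb : d ≠ b) : Disjoint d b := by
  rcases mem_insert.1 hb with rfl | hb
  exacts [disjoint_empty_right d, P.disjoint hd hb hdb]

lemma parts_avoid_of_mem_insert_empty (P : Finpartition s) (hb : b ∈ insert ∅ P.parts) :
    (P.avoid b).parts = P.parts.erase b := by
  ext c
  simp only [mem_avoid, mem_erase]
  constructor
  · rintro ⟨d, hd, hdb, rfl⟩
    have hne : d ≠ b := by rintro rfl; exact hdb le_rfl
    rw [sdiff_eq_self_of_disjoint (disjoint_of_mem_insert_empty hd hb hne)]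
    exact ⟨hne, hd⟩
  · rintro ⟨hcb, hc⟩
    have hdisj := disjoint_of_mem_insert_empty hc hb hcb
    exact ⟨c, hc, fun hle ↦ P.ne_bot hc (hdisj.eq_bot_of_le hle), sdiff_eq_self_of_disjoint hdisj⟩

lemma insert_notMem_erase_parts (ha : a ∉ s) (P : Finpartition s) (b : Finset α) :
    insert a b ∉ P.parts.erase b :=
  fun h ↦ ha (P.le (mem_of_mem_erase h) (mem_insert_self a b))

/-- Adds `a` to the part `b` of `P`, or as a new singleton part when `b = ∅`. -/
def insertInto (P : Finpartition s) (ha : a ∉ s) (hb : b ∈ insert ∅ P.parts) :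
    Finpartition (insert a s) :=
  (P.avoid b).extend (b := insert a b) (insert_ne_empty a b)
    (disjoint_insert_right.2 ⟨fun h ↦ ha (sdiff_subset h), sdiff_disjoint⟩)
    (by simp [sdiff_union_of_subset (subset_of_mem_insert_empty hb)])

variable {P : Finpartition s} (ha : a ∉ s) (hb : b ∈ insert ∅ P.parts)

lemma parts_insertInto : (P.insertInto ha hb).parts = insert (insert a b) (P.parts.erase b) := by
  rw [insertInto, extend_parts, parts_avoid_of_mem_insert_empty P hb]

lemma card_parts_insertInto :
    #(P.insertInto ha hb).parts = if b = ∅ then #P.parts + 1 else #P.parts := by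
  rw [parts_insertInto, card_insert_of_notMem (insert_notMem_erase_parts ha P b)]
  split_ifs with h
  · rw [h, erase_eq_of_notMem P.empty_notMem_parts]
  · exact card_erase_add_one ((mem_insert.1 hb).resolve_left h)

lemma part_insertInto : (P.insertInto ha hb).part a = insert a b :=
  (P.insertInto ha hb).part_eq_of_mem (by rw [parts_insertInto]; exact mem_insert_self _ _)
    (mem_insert_self a b)

lemma insertInto_injective {Q : Finpartition s} {c : Finset α} (hc : c ∈ insert ∅ Q.parts)
    (h : P.insertInto ha hb = Q.insertInto ha hc) : P = Q ∧ b = c := by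
  have hbc : b = c := by
    have := congrArg (part · a) h
    simp only [part_insertInto] at this
    rw [← erase_insert fun h ↦ ha (subset_of_mem_insert_empty hb h), this,
      erase_insert fun h ↦ ha (subset_of_mem_insert_empty hc h)]
  subst hbc
  refine ⟨Finpartition.ext ?_, rfl⟩
  have herase : P.parts.erase b = Q.parts.erase b := by
    have := congrArg (fun R ↦ R.parts.erase (insert a b)) h
    simpa only [parts_insertInto, erase_insert (insert_notMem_erase_parts ha _ _)] using this
  rcases mem_insert.1 hb with rfl | hbP
  · rwa [erase_eq_of_notMem P.empty_notMem_parts, erase_eq_of_notMem Q.empty_notMem_parts]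
      at herase
  · have hbQ : b ∈ Q.parts := (mem_insert.1 hc).resolve_left (P.ne_bot hbP)
    rw [← insert_erase hbP, ← insert_erase hbQ, herase]

lemma sdiff_part_mem_insert_empty_avoid (P : Finpartition s) (ha : a ∈ s) :
    P.part a \ {a} ∈ insert ∅ (P.avoid {a}).parts := by
  by_cases h : P.part a = {a}
  · simp [h]
  · refine mem_insert_of_mem ((P.mem_avoid).2 ⟨P.part a, P.part_mem.2 ha, fun hle ↦ ?_, rfl⟩)
    rcases subset_singleton_iff.1 hle with h' | h'
    exacts [(P.part_nonempty.2 ha).ne_empty h', h h']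

lemma erase_parts_avoid_singleton (P : Finpartition s) (ha : a ∈ s) :
    (P.avoid {a}).parts.erase (P.part a \ {a}) = P.parts.erase (P.part a) := by
  ext c
  simp only [mem_erase, mem_avoid]
  constructor
  · rintro ⟨hc, d, hd, -, rfl⟩
    have hdp : d ≠ P.part a := by rintro rfl; exact hc rfl
    have had : a ∉ d := fun had ↦ hdp (P.part_eq_of_mem hd had).symm
    rw [sdiff_eq_self_of_disjoint (disjoint_singleton_right.2 had)]
    exact ⟨hdp, hd⟩
  · rintro ⟨hcp, hc⟩
    have had : a ∉ c := fun had ↦ hcp (P.part_eq_of_mem hc had).symm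
    have hdisj : Disjoint c (P.part a) := P.disjoint hc (P.part_mem.2 ha) hcp
    refine ⟨fun h ↦ P.ne_bot hc (hdisj.eq_bot_of_le (h ▸ sdiff_subset)), c, hc,
      fun hle ↦ P.ne_bot hc ?_, sdiff_eq_self_of_disjoint (disjoint_singleton_right.2 had)⟩
    rcases subset_singleton_iff.1 hle with h | h
    exacts [h, absurd (h ▸ mem_singleton_self a) had]

lemma exists_insertInto_eq (ha : a ∉ s) (P : Finpartition (insert a s)) :
    ∃ (Q : Finpartition s) (b : Finset α) (hb : b ∈ insert ∅ Q.parts), Q.insertInto ha hb = P := by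
  have has : a ∈ insert a s := mem_insert_self a s
  have hs : insert a s \ {a} = s := by rw [insert_sdiff_of_mem _ (mem_singleton_self a),
    sdiff_eq_self_of_disjoint (disjoint_singleton_right.2 ha)]
  refine ⟨(P.avoid {a}).copy hs, P.part a \ {a}, P.sdiff_part_mem_insert_empty_avoid has,
    Finpartition.ext ((parts_insertInto ha _).trans ?_)⟩
  rw [copy_parts, erase_parts_avoid_singleton P has,
    insert_sdiff_self_of_mem (P.mem_part has), insert_erase (P.part_mem.2 has)]

end Insert

section Embed

variable {α β : Type*} [DecidableEq α] [DecidableEq β] {u : Finset β}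

def embed (f : β ↪ α) (P : Finpartition u) : Finpartition (u.map f) where
  parts := P.parts.map (mapEmbedding f).toEmbedding
  supIndep := by
    rw [supIndep_iff_pairwiseDisjoint, coe_map]
    rintro _ ⟨p, hp, rfl⟩ _ ⟨q, hq, rfl⟩ hpq
    exact (disjoint_map f).2 (P.disjoint hp hq (ne_of_apply_ne _ hpq))
  sup_parts := by
    ext x
    simp only [mem_sup, mem_map, ← P.sup_parts, id]
    aesop
  bot_notMem := by simp [P.empty_notMem_parts]

lemma parts_embed (f : β ↪ α) (P : Finpartition u) :
    (P.embed f).parts = P.parts.map (mapEmbedding f).toEmbedding := rfl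

lemma embed_injective (f : β ↪ α) : Function.Injective (embed f : Finpartition u → _) :=
  fun _ _ h ↦ Finpartition.ext (map_injective _ (congrArg parts h))

lemma embed_surjective (f : β ↪ α) : Function.Surjective (embed f : Finpartition u → _) := by
  intro R
  have hR : ∀ p ∈ R.parts, (p.preimage f f.injective.injOn).map f = p := fun p hp ↦ by
    obtain ⟨t, -, rfl⟩ := subset_map_iff.1 (R.le hp)
    rw [preimage_map]
  refine ⟨⟨R.parts.image (·.preimage f f.injective.injOn), ?_, ?_, ?_⟩, Finpartition.ext ?_⟩
  · rw [supIndep_iff_pairwiseDisjoint, coe_image]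
    rintro _ ⟨p, hp, rfl⟩ _ ⟨q, hq, rfl⟩ hpq
    exact disjoint_preimage (hs := f.injective.injOn) (ht := f.injective.injOn)
      (R.disjoint hp hq (by rintro rfl; exact hpq rfl))
  · ext x
    have hx : x ∈ u ↔ f x ∈ R.parts.sup id := by rw [R.sup_parts, mem_map']
    simp [hx, mem_sup]
  · rw [mem_image]
    rintro ⟨p, hp, hpe⟩
    exact R.ne_bot hp (by rw [← hR p hp, hpe]; exact map_empty f)
  · rw [parts_embed, map_eq_image, image_image]
    exact (image_congr fun p hp ↦ hR p hp).trans image_id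

end Embed

end Finpartition

namespace SimpleGraph

section IndepPartitions

variable {V : Type*} [DecidableEq V] (G : SimpleGraph V)

def IsIndepPartition {s : Finset V} (P : Finpartition s) : Prop :=
  ∀ p ∈ P.parts, ∀ u ∈ p, ∀ v ∈ p, ¬ G.Adj u v

open scoped Classical in
noncomputable def indepPartitions (s : Finset V) (k : ℕ) : Finset (Finpartition s) :=
  {P | #P.parts = k ∧ G.IsIndepPartition P}

variable {G} {s b : Finset V} {a u : V}

lemma mem_indepPartitions {k : ℕ} {P : Finpartition s} :
    P ∈ G.indepPartitions s k ↔ #P.parts = k ∧ G.IsIndepPartition P := by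
  simp [indepPartitions]

lemma isIndepPartition_insertInto_iff {P : Finpartition s} (ha : a ∉ s)
    (hb : b ∈ insert ∅ P.parts) :
    G.IsIndepPartition (P.insertInto ha hb) ↔ G.IsIndepPartition P ∧ ∀ u ∈ b, ¬ G.Adj a u := by
  have hbP : ∀ u ∈ b, ∀ w ∈ b, G.IsIndepPartition P → ¬ G.Adj u w := by
    rcases mem_insert.1 hb with rfl | hb
    · simp
    · exact fun u hu w hw hP ↦ hP b hb u hu w hw
  simp only [IsIndepPartition, Finpartition.parts_insertInto, forall_mem_insert, mem_erase]
  constructor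
  · rintro ⟨⟨⟨-, hab⟩, hb⟩, hP⟩
    refine ⟨fun p hp ↦ ?_, hab⟩
    by_cases hpb : p = b
    · subst hpb
      exact fun u hu w hw ↦ (hb u hu).2 w hw
    · exact hP p ⟨hpb, hp⟩
  · rintro ⟨hP, hab⟩
    exact ⟨⟨⟨G.irrefl, hab⟩, fun u hu ↦ ⟨fun h ↦ hab u hu h.symm,
      fun w hw ↦ hbP u hu w hw hP⟩⟩, fun p hp ↦ hP p hp.2⟩

lemma card_indepPartitions_insert [DecidableRel G.Adj] (ha : a ∉ s) (k : ℕ) :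
    #(G.indepPartitions (insert a s) (k + 1)) = #(G.indepPartitions s k) +
      ∑ Q ∈ G.indepPartitions s (k + 1), #{b ∈ Q.parts | ∀ u ∈ b, ¬ G.Adj a u} := by
  classical
  set T := (G.indepPartitions s k).sigma (fun _ ↦ {∅}) ∪
    (G.indepPartitions s (k + 1)).sigma (fun Q ↦ {b ∈ Q.parts | ∀ u ∈ b, ¬ G.Adj a u})
  have hT : #T = #(G.indepPartitions s k) +
      ∑ Q ∈ G.indepPartitions s (k + 1), #{b ∈ Q.parts | ∀ u ∈ b, ¬ G.Adj a u} := by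
    rw [card_union_of_disjoint, card_sigma, card_sigma]
    · simp
    · rw [Finset.disjoint_left]
      rintro ⟨Q, b⟩ h₀ h₁
      simp only [mem_sigma, mem_singleton, mem_filter] at h₀ h₁
      exact Q.empty_notMem_parts (h₀.2 ▸ h₁.2.1)
  have hmem : ∀ x ∈ T, x.2 ∈ insert ∅ x.1.parts := by
    rintro ⟨Q, b⟩ hx
    simp only [T, mem_union, mem_sigma, mem_singleton, mem_filter] at hx
    rcases hx with ⟨-, rfl⟩ | ⟨-, hb, -⟩
    exacts [mem_insert_self _ _, mem_insert_of_mem hb]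
  rw [← hT]
  symm
  refine card_bij (fun x hx ↦ x.1.insertInto ha (hmem x hx)) ?_ ?_ ?_
  · rintro ⟨Q, b⟩ hx
    rw [mem_indepPartitions, Finpartition.card_parts_insertInto, isIndepPartition_insertInto_iff]
    simp only [T, mem_union, mem_sigma, mem_singleton, mem_filter, mem_indepPartitions] at hx
    rcases hx with ⟨⟨hQk, hQ⟩, rfl⟩ | ⟨⟨hQk, hQ⟩, hb, hab⟩
    · exact ⟨by rw [if_pos rfl, hQk], hQ, by simp⟩
    · exact ⟨by rw [if_neg (ne_of_mem_of_not_mem hb Q.empty_notMem_parts), hQk], hQ, hab⟩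
  · rintro ⟨Q₁, b₁⟩ h₁ ⟨Q₂, b₂⟩ h₂ h
    obtain ⟨rfl, rfl⟩ := Finpartition.insertInto_injective ha _ _ h
    rfl
  · intro P hP
    obtain ⟨Q, b, hb, rfl⟩ := Finpartition.exists_insertInto_eq ha P
    refine ⟨⟨Q, b⟩, ?_, rfl⟩
    rw [mem_indepPartitions, Finpartition.card_parts_insertInto,
      isIndepPartition_insertInto_iff] at hP
    simp only [T, mem_union, mem_sigma, mem_singleton, mem_filter, mem_indepPartitions]
    rcases mem_insert.1 hb with rfl | hbQ
    · simp_all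
    · simp_all [ne_of_mem_of_not_mem hbQ Q.empty_notMem_parts]

lemma indepPartitions_zero (hs : s.Nonempty) : G.indepPartitions s 0 = ∅ := by
  ext P
  simp only [mem_indepPartitions, card_eq_zero, Finpartition.parts_eq_empty_iff, notMem_empty,
    iff_false, not_and]
  exact fun h ↦ absurd h hs.ne_empty

lemma card_indepPartitions_bot (s : Finset V) (k : ℕ) :
    #((⊥ : SimpleGraph V).indepPartitions s k) = stirling2 #s k := by
  induction s using Finset.induction_on generalizing k with
  | empty =>
    have hP : ∀ P : Finpartition (∅ : Finset V), P.parts = ∅ := fun P ↦ P.parts_eq_empty_iff.2 rfl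
    rcases k with _ | k
    · rw [card_empty, show stirling2 0 0 = 1 from rfl, card_eq_one]
      refine ⟨Finpartition.empty _, eq_singleton_iff_unique_mem.2 ⟨?_, fun P _ ↦ ?_⟩⟩
      · simp [mem_indepPartitions, IsIndepPartition]
      · exact Finpartition.ext ((hP P).trans (hP _).symm)
    · simp [indepPartitions, hP, stirling2]
  | insert a s ha ih =>
    rw [card_insert_of_notMem ha]
    rcases k with _ | k
    · rw [indepPartitions_zero (insert_nonempty a s)]
      rfl
    · have hsum : ∑ Q ∈ (⊥ : SimpleGraph V).indepPartitions s (k + 1),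
          #{b ∈ Q.parts | ∀ u ∈ b, ¬ (⊥ : SimpleGraph V).Adj a u} =
          (k + 1) * #((⊥ : SimpleGraph V).indepPartitions s (k + 1)) := by
        rw [mul_comm, ← smul_eq_mul, ← sum_const]
        exact sum_congr rfl fun Q hQ ↦ by simp [(mem_indepPartitions.1 hQ).1]
      rw [card_indepPartitions_insert ha, hsum, stirling2, ih, ih, add_comm]

lemma card_indepPartitions_insert_of_neighborSet_eq [DecidableRel G.Adj] (ha : a ∉ s) (hu : u ∈ s)
    (hau : G.neighborSet a = {u}) (k : ℕ) :
    #(G.indepPartitions (insert a s) (k + 1)) =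
      #(G.indepPartitions s k) + k * #(G.indepPartitions s (k + 1)) := by
  have hnbr : ∀ b : Finset V, (∀ w ∈ b, ¬ G.Adj a w) ↔ u ∉ b := fun b ↦ by
    simp [← mem_neighborSet, hau]
  rw [card_indepPartitions_insert ha, mul_comm, ← smul_eq_mul, ← sum_const]
  congr 1
  refine sum_congr rfl fun Q hQ ↦ ?_
  rw [filter_congr fun b _ ↦ hnbr b, Q.card_filter_notMem_parts hu, (mem_indepPartitions.1 hQ).1,
    Nat.add_sub_cancel]

lemma isIndepPartition_embed_iff {W : Type*} [DecidableEq W] {t : Finset W} (f : W ↪ V)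
    (P : Finpartition t) : G.IsIndepPartition (P.embed f) ↔ (G.comap f).IsIndepPartition P := by
  simp [IsIndepPartition, Finpartition.parts_embed]

lemma card_indepPartitions_map {W : Type*} [DecidableEq W] (f : W ↪ V) (t : Finset W) (k : ℕ) :
    #((G.comap f).indepPartitions t k) = #(G.indepPartitions (t.map f) k) := by
  have hmem : ∀ P : Finpartition t,
      P.embed f ∈ G.indepPartitions (t.map f) k ↔ P ∈ (G.comap f).indepPartitions t k := by
    simp [mem_indepPartitions, isIndepPartition_embed_iff, Finpartition.parts_embed]
  refine card_bij (fun P _ ↦ P.embed f) (fun P hP ↦ (hmem P).2 hP)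
    (fun _ _ _ _ h ↦ Finpartition.embed_injective f h) fun R hR ↦ ?_
  obtain ⟨P, rfl⟩ := Finpartition.embed_surjective f R
  exact ⟨P, (hmem P).1 hR, rfl⟩

end IndepPartitions

section Connectivity

variable {V : Type*} {G : SimpleGraph V}

lemma card_connectedComponent_le [Finite V] : Nat.card G.ConnectedComponent ≤ Nat.card V :=
  Nat.card_le_card_of_surjective _ fun c ↦ c.exists_rep

lemma card_connectedComponent_bot : Nat.card (⊥ : SimpleGraph V).ConnectedComponent = Nat.card V :=
  (Nat.card_eq_of_bijective _ ⟨fun _ _ h ↦ reachable_bot.1 (ConnectedComponent.exact h),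
    fun c ↦ c.exists_rep⟩).symm

lemma IsAcyclic.exists_neighborSet_eq_singleton [Finite V] (hG : G.IsAcyclic) (hne : G ≠ ⊥) :
    ∃ v u, G.neighborSet v = {u} := by
  obtain ⟨x, y, hxy⟩ : ∃ x y, G.Adj x y := by
    by_contra! h
    exact hne (eq_bot_iff_forall_not_adj.2 h)
  have : Nonempty V := ⟨x⟩
  have := Fintype.ofFinite V
  obtain ⟨v, w, p, hp, hmax⟩ := Walk.exists_isPath_forall_isPath_length_le_length G
  have hnil : ¬p.Nil := fun h ↦ by
    have := hmax x y (Walk.cons hxy .nil) (by simp [hxy.ne])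
    simp [Walk.length_eq_zero_iff.2 h] at this
  refine ⟨v, p.snd, Set.eq_singleton_iff_unique_mem.2 ⟨p.adj_snd hnil, fun u hu ↦ ?_⟩⟩
  apply hG.eq_snd_of_adj_start hp hu
  by_contra hup
  have := hmax u w (p.cons (G.adj_symm hu)) (hp.cons hup)
  simp at this

lemma reachable_induce_compl_singleton {v x y : V} (hv : (G.neighborSet v).Subsingleton)
    (hx : x ≠ v) (hy : y ≠ v) (h : G.Reachable x y) :
    (G.induce {v}ᶜ).Reachable ⟨x, hx⟩ ⟨y, hy⟩ := by
  obtain ⟨p, hp⟩ := h.exists_isPath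
  have hvp : v ∉ p.support :=
    hp.isTrail.not_mem_support_of_subsingleton_neighborSet hx.symm hy.symm hv
  exact ⟨p.induce {v}ᶜ fun w hw ↦ by rintro rfl; exact hvp hw⟩

lemma card_connectedComponent_induce_compl_singleton {v u : V} (hv : G.neighborSet v = {u}) :
    Nat.card (G.induce {v}ᶜ).ConnectedComponent = Nat.card G.ConnectedComponent := by
  have hvu : G.Adj v u := by simp [← mem_neighborSet, hv]
  refine Nat.card_eq_of_bijective (ConnectedComponent.map (Embedding.induce {v}ᶜ).toHom)
    ⟨fun c₁ c₂ h ↦ ?_, fun c ↦ ?_⟩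
  · induction c₁ using ConnectedComponent.ind with | h x =>
    induction c₂ using ConnectedComponent.ind with | h y =>
    obtain ⟨x, hx⟩ := x
    obtain ⟨y, hy⟩ := y
    simp only [ConnectedComponent.map_mk, ConnectedComponent.eq] at h ⊢
    exact reachable_induce_compl_singleton (hv ▸ Set.subsingleton_singleton) hx hy h
  · induction c using ConnectedComponent.ind with | h w =>
    by_cases hw : w = v
    · subst hw
      refine ⟨(G.induce {w}ᶜ).connectedComponentMk ⟨u, hvu.ne.symm⟩, ?_⟩
      exact (ConnectedComponent.connectedComponentMk_eq_of_adj hvu).symm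
    · exact ⟨(G.induce {v}ᶜ).connectedComponentMk ⟨w, hw⟩, rfl⟩

end Connectivity

section Forest

variable {V : Type} [DecidableEq V]

lemma graphStirling_eq_card_indepPartitions [Fintype V] (G : SimpleGraph V) (k : ℕ) :
    graphStirling G k = #(G.indepPartitions univ k) := by
  classical
  rw [graphStirling, Nat.card_eq_fintype_card, Fintype.card_subtype, indepPartitions]
  congr

lemma graphStirling_induce (G : SimpleGraph V) (s : Set V) [Fintype s] (k : ℕ) :
    graphStirling (G.induce s) k = #(G.indepPartitions s.toFinset k) := by
  rw [graphStirling_eq_card_indepPartitions]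
  exact card_indepPartitions_map (Function.Embedding.subtype _) univ k

variable [Fintype V]

lemma graphStirling_zero [Nonempty V] (G : SimpleGraph V) : graphStirling G 0 = 0 := by
  rw [graphStirling_eq_card_indepPartitions, indepPartitions_zero univ_nonempty, card_empty]

lemma graphStirling_bot (k : ℕ) :
    graphStirling (⊥ : SimpleGraph V) k = stirling2 (Fintype.card V) k := by
  rw [graphStirling_eq_card_indepPartitions, card_indepPartitions_bot, card_univ]

lemma graphStirling_succ_of_neighborSet_eq {G : SimpleGraph V} {v u : V}
    (hvu : G.neighborSet v = {u}) (k : ℕ) :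
    graphStirling G (k + 1) =
      graphStirling (G.induce {v}ᶜ) k + k * graphStirling (G.induce {v}ᶜ) (k + 1) := by
  classical
  have huv : u ≠ v := (G.ne_of_adj (by simp [← mem_neighborSet, hvu])).symm
  rw [graphStirling_eq_card_indepPartitions, ← insert_compl_self v,
    card_indepPartitions_insert_of_neighborSet_eq (by simp) (by simpa using huv) hvu,
    graphStirling_induce, graphStirling_induce, Set.toFinset_compl, Set.toFinset_singleton]

theorem IsAcyclic.graphStirling_eq {G : SimpleGraph V} (hG : G.IsAcyclic) (k : ℕ) :
    graphStirling G k = forestStirling (Nat.card G.ConnectedComponent)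
      (Fintype.card V - Nat.card G.ConnectedComponent) k := by
  induction hn : Fintype.card V using Nat.strong_induction_on generalizing V k with
  | _ n ih =>
  obtain rfl | hne := eq_or_ne G ⊥
  · rw [graphStirling_bot, card_connectedComponent_bot, Nat.card_eq_fintype_card, hn,
      Nat.sub_self]
    rfl
  obtain ⟨v, u, hvu⟩ := hG.exists_neighborSet_eq_singleton hne
  have hcard : Fintype.card ({v}ᶜ : Set V) = n - 1 := by
    rw [Fintype.card_compl_set, Set.card_singleton, hn]
  have hc := card_connectedComponent_induce_compl_singleton hvu
  have hle : Nat.card G.ConnectedComponent ≤ n - 1 := by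
    rw [← hc, ← hcard, ← Nat.card_eq_fintype_card]
    exact card_connectedComponent_le
  have hpos : 0 < n := hn ▸ Fintype.card_pos_iff.2 ⟨v⟩
  have ih' : ∀ j, graphStirling (G.induce {v}ᶜ) j = forestStirling
      (Nat.card G.ConnectedComponent) (n - 1 - Nat.card G.ConnectedComponent) j := fun j ↦ by
    rw [ih (n - 1) (by omega) (hG.induce _) j hcard, hc]
  rw [show n - Nat.card G.ConnectedComponent = n - 1 - Nat.card G.ConnectedComponent + 1 by omega]
  rcases k with _ | k
  · have : Nonempty V := ⟨v⟩
    rw [graphStirling_zero]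
    rfl
  · rw [graphStirling_succ_of_neighborSet_eq hvu, ih', ih']
    rfl

end Forest

end SimpleGraph

theorem forest_graphStirling_pascal
    {V₁ V₂ V₃ : Type} [Fintype V₁] [DecidableEq V₁] [Fintype V₂] [DecidableEq V₂]
    [Fintype V₃] [DecidableEq V₃]
    (G₁ : SimpleGraph V₁) (G₂ : SimpleGraph V₂) (G₃ : SimpleGraph V₃)
    (h₁ : G₁.IsAcyclic) (h₂ : G₂.IsAcyclic) (h₃ : G₃.IsAcyclic)
    (n c : ℕ) (hc : 1 ≤ c) (hn : c + 1 ≤ n)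
    (hn₁ : Fintype.card V₁ = n + 1) (hc₁ : Nat.card G₁.ConnectedComponent = c + 1)
    (hn₂ : Fintype.card V₂ = n + 1) (hc₂ : Nat.card G₂.ConnectedComponent = c)
    (hn₃ : Fintype.card V₃ = n) (hc₃ : Nat.card G₃.ConnectedComponent = c)
    (k : ℕ) :
    graphStirling G₁ k = graphStirling G₂ k + graphStirling G₃ k := by
  rw [h₁.graphStirling_eq, h₂.graphStirling_eq, h₃.graphStirling_eq, hn₁, hc₁, hn₂, hc₂, hn₃, hc₃,
    show n + 1 - (c + 1) = n - c by omega, show n + 1 - c = n - c + 1 by omega]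
  exact forestStirling_pascal hc (n - c) k
end

section
/- For all n ≥ 2 and all k, the number of partitions of the vertex set of the n-cycle into k non-empty independent sets equals Σ_{i≥0} (-1)^i S(n-1-i, k-1), where S(·,·) denotes the Stirling numbers of the second kind (interpreting C_2 as a single edge). -/
open Finset SimpleGraph Polynomial

/-!
Labelling the blocks of a partition of `V(G)` into `k` independent sets by `Fin k` turns it into a
surjective proper colouring, so such colourings number `k! * S(G, k)`.

Let `p(m, k)` count the surjective proper `k`-colourings of the path `P_m`. Deleting the first
vertex, either the rest still uses all `k` colours and the first vertex takes any of the `k - 1`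
colours other than its neighbour's, or the rest misses exactly the first vertex's colour. Hence
`p(m + 1, k) = (k - 1) p(m, k) + k p(m, k - 1)`, the recurrence of `k! * S(m - 1, k - 1)`.

Let `c(m)` count those of the cycle `C_m`. A colouring of `P_{m+1}` (`m ≥ 2`) with distinct end
colours is one of `C_{m+1}`; if the ends agree, deleting the first vertex leaves one of `C_m`. So
`c(m + 1) + c(m) = p(m + 1)` and `c(2) = p(2)`, which solves to the alternating sum.
-/
open Function
open scoped Nat

lemma Function.Surjective.exists_equiv_comp_eq {V Q β : Type*} {π : V → Q} (hπ : Surjective π)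
    {f : V → β} (hf : Surjective f) (h : ∀ u v, π u = π v ↔ f u = f v) :
    ∃ e : Q ≃ β, ⇑e ∘ π = f := by
  have hfπ : ∀ v, f (surjInv hπ (π v)) = f v := fun v => (h _ _).1 (surjInv_eq hπ _)
  refine ⟨.ofBijective (f ∘ surjInv hπ) ⟨?_, fun c => ?_⟩, funext hfπ⟩
  · intro q r hqr
    obtain ⟨u, rfl⟩ := hπ q
    obtain ⟨v, rfl⟩ := hπ r
    simpa only [comp_apply, hfπ, ← h] using hqr
  · obtain ⟨v, rfl⟩ := hf c
    exact ⟨π v, hfπ v⟩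

lemma Nat.card_subtype_ne {α : Type*} [Finite α] (a : α) :
    Nat.card {c // c ≠ a} = Nat.card α - 1 := by
  have := Fintype.ofFinite α
  classical
  rw [Nat.card_eq_fintype_card, Nat.card_eq_fintype_card]
  exact Set.card_ne_eq a

namespace Fin
variable {α : Type*} {n : ℕ}

lemma surjective_iff_insert_range_tail {f : Fin (n + 1) → α} :
    Surjective f ↔ insert (f 0) (Set.range (tail f)) = Set.univ := by
  rw [← Set.range_eq_univ, range_fin_succ]

lemma surjective_tail_iff {f : Fin (n + 1) → α} (hf : Surjective f) :
    Surjective (tail f) ↔ f 0 ∈ Set.range (tail f) := by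
  rw [← Set.range_eq_univ, ← surjective_iff_insert_range_tail.1 hf]
  exact ⟨fun h => h ▸ Set.mem_insert _ _, fun h => (Set.insert_eq_of_mem h).symm⟩

lemma range_tail_eq_compl {f : Fin (n + 1) → α} (hf : Surjective f) (htail : ¬Surjective (tail f)) :
    Set.range (tail f) = {f 0}ᶜ := by
  have hmiss := (surjective_tail_iff hf).not.1 htail
  have hcover := surjective_iff_insert_range_tail.1 hf
  ext c
  rcases eq_or_ne c (f 0) with rfl | hc
  · simpa using hmiss
  · have hc' : c ∈ insert (f 0) (Set.range (tail f)) := hcover ▸ Set.mem_univ c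
    simpa [hc] using hc'

end Fin

namespace Finpartition
variable {V : Type*} [Fintype V] [DecidableEq V]

def block (P : Finpartition (univ : Finset V)) (v : V) : P.parts :=
  ⟨P.part v, P.part_mem.2 (mem_univ v)⟩

lemma block_surjective (P : Finpartition (univ : Finset V)) : Surjective P.block := by
  rintro ⟨p, hp⟩
  obtain ⟨v, -, hv⟩ := P.part_surjOn hp
  exact ⟨v, Subtype.ext hv⟩

lemma block_eq_block_iff {P : Finpartition (univ : Finset V)} {u v : V} :
    P.block u = P.block v ↔ u ∈ P.part v :=
  Subtype.ext_iff.trans (P.mem_part_iff_part_eq_part (mem_univ u) (mem_univ v)).symm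

lemma ext_of_block_eq_block_iff {P Q : Finpartition (univ : Finset V)}
    (h : ∀ u v, P.block u = P.block v ↔ Q.block u = Q.block v) : P = Q := by
  have hpart : ∀ v, P.part v = Q.part v := fun v => by
    ext u
    simpa only [block_eq_block_iff] using h u v
  have hparts : ∀ R : Finpartition (univ : Finset V), R.parts = univ.image R.part := fun R => by
    ext p
    simp only [mem_image, mem_univ, true_and]
    exact ⟨fun hp => by simpa using R.part_surjOn hp, by rintro ⟨v, rfl⟩; simp⟩
  ext1
  rw [hparts P, hparts Q, funext hpart]

end Finpartition

namespace SimpleGraph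

section Coloring
variable {V α β : Type*}

def IsProperColoring (G : SimpleGraph V) (f : V → α) : Prop :=
  ∀ ⦃u v⦄, G.Adj u v → f u ≠ f v

abbrev SurjColoring (G : SimpleGraph V) (α : Type*) : Type _ :=
  {f : V → α // Surjective f ∧ G.IsProperColoring f}

lemma isProperColoring_comp_iff {G : SimpleGraph V} {f : V → α} {g : α → β} (hg : Injective g) :
    G.IsProperColoring (g ∘ f) ↔ G.IsProperColoring f :=
  forall₂_congr fun _ _ => imp_congr_right fun _ => hg.ne_iff

lemma isProperColoring_sup {G H : SimpleGraph V} {f : V → α} :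
    (G ⊔ H).IsProperColoring f ↔ G.IsProperColoring f ∧ H.IsProperColoring f := by
  simp only [IsProperColoring, sup_adj, or_imp, forall_and]

lemma isProperColoring_edge {s t : V} (hst : s ≠ t) {f : V → α} :
    (edge s t).IsProperColoring f ↔ f s ≠ f t := by
  refine ⟨fun h => h ((edge_adj s t s t).2 ⟨.inl ⟨rfl, rfl⟩, hst⟩), ?_⟩
  rintro h u v huv
  obtain ⟨⟨rfl, rfl⟩ | ⟨rfl, rfl⟩, -⟩ := (edge_adj s t u v).1 huv
  exacts [h, h.symm]

def SurjColoring.congr (G : SimpleGraph V) (e : α ≃ β) : G.SurjColoring α ≃ G.SurjColoring β :=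
  Equiv.subtypeEquiv ((Equiv.refl V).arrowCongr e) fun f => by
    change _ ↔ Surjective (e ∘ f) ∧ G.IsProperColoring (e ∘ f)
    rw [EquivLike.comp_surjective, isProperColoring_comp_iff e.injective]

end Coloring

section Labeling
variable {V : Type} [Fintype V] [DecidableEq V] {G : SimpleGraph V} {k : ℕ}

abbrev IndepPartition (G : SimpleGraph V) (k : ℕ) : Type :=
  {P : Finpartition (univ : Finset V) //
    #P.parts = k ∧ ∀ p ∈ P.parts, ∀ u ∈ p, ∀ v ∈ p, ¬ G.Adj u v}

def coloringOfLabeling : (Σ P : G.IndepPartition k, P.1.parts ≃ Fin k) → G.SurjColoring (Fin k) :=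
  fun ⟨P, e⟩ => ⟨e ∘ P.1.block, e.surjective.comp P.1.block_surjective, fun u v huv heq => by
    have hvu : v ∈ P.1.part u := Finpartition.block_eq_block_iff.1 (e.injective heq).symm
    exact P.2.2 _ (P.1.part_mem.2 (mem_univ u)) u (P.1.mem_part (mem_univ u)) v hvu huv⟩

lemma coloringOfLabeling_injective : Injective (coloringOfLabeling (G := G) (k := k)) := by
  rintro ⟨P, e⟩ ⟨Q, e'⟩ h
  have hf : ⇑e ∘ P.1.block = ⇑e' ∘ Q.1.block := congrArg Subtype.val h
  obtain rfl : P = Q := Subtype.ext <| Finpartition.ext_of_block_eq_block_iff fun u v => by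
    rw [← e.injective.eq_iff, ← e'.injective.eq_iff]
    exact iff_of_eq (congrArg₂ (· = ·) (congrFun hf u) (congrFun hf v))
  obtain rfl : e = e' := Equiv.ext <| P.1.block_surjective.forall.2 (congrFun hf)
  rfl

lemma coloringOfLabeling_surjective : Surjective (coloringOfLabeling (G := G) (k := k)) := by
  rintro ⟨f, hf, hproper⟩
  classical
  let P : Finpartition (univ : Finset V) := .ofSetoid (Setoid.ker f)
  have hP : ∀ u v, P.block u = P.block v ↔ f u = f v := fun u v => by
    rw [Finpartition.block_eq_block_iff, Finpartition.mem_part_ofSetoid_iff_rel, Setoid.ker_def,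
      eq_comm]
  obtain ⟨e, he⟩ := P.block_surjective.exists_equiv_comp_eq hf hP
  have hindep : ∀ p ∈ P.parts, ∀ u ∈ p, ∀ v ∈ p, ¬ G.Adj u v := by
    intro p hp u hu v hv huv
    refine hproper huv ((hP u v).1 ?_)
    rw [Finpartition.block_eq_block_iff, P.part_eq_of_mem hp hv]
    exact hu
  refine ⟨⟨⟨P, ?_, hindep⟩, e⟩, Subtype.ext he⟩
  rw [← Fintype.card_coe, Fintype.card_congr e, Fintype.card_fin]

variable (G k)

lemma card_surjColoring_fin : Nat.card (G.SurjColoring (Fin k)) = k ! * graphStirling G k := by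
  have := Fintype.ofFinite (G.IndepPartition k)
  have hlabel (P : G.IndepPartition k) : Nat.card (P.1.parts ≃ Fin k) = k ! := by
    rw [Nat.card_eq_fintype_card, Fintype.card_equiv (P.1.parts.equivFinOfCardEq P.2.1),
      Fintype.card_coe, P.2.1]
  rw [← Nat.card_congr
      (.ofBijective _ ⟨coloringOfLabeling_injective, coloringOfLabeling_surjective⟩),
    Nat.card_sigma, Fintype.sum_congr _ _ hlabel, sum_const, card_univ, smul_eq_mul, graphStirling,
    Nat.card_eq_fintype_card, mul_comm]

end Labeling

section PathCycle
variable {n : ℕ} {α : Type*}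

lemma cycleGraph_eq_pathGraph_sup_edge (n : ℕ) :
    cycleGraph (n + 2) = pathGraph (n + 2) ⊔ edge 0 (Fin.last (n + 1)) := by
  ext u v
  simp only [cycleGraph_adj, sub_eq_iff_eq_add', sup_adj, pathGraph_adj, edge_adj, Fin.ext_iff,
    Fin.val_add_one, Fin.val_last, Fin.val_zero]
  split_ifs <;> omega

lemma isProperColoring_cycleGraph_iff {f : Fin (n + 2) → α} :
    (cycleGraph (n + 2)).IsProperColoring f ↔
      (pathGraph (n + 2)).IsProperColoring f ∧ f 0 ≠ f (Fin.last (n + 1)) := by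
  rw [cycleGraph_eq_pathGraph_sup_edge, isProperColoring_sup,
    isProperColoring_edge Fin.last_pos.ne]

lemma pathGraph_adj_succ_succ {u v : Fin n} :
    (pathGraph (n + 1)).Adj u.succ v.succ ↔ (pathGraph n).Adj u v := by
  simp [pathGraph_adj]

lemma pathGraph_adj_zero_succ {v : Fin (n + 1)} : (pathGraph (n + 2)).Adj 0 v.succ ↔ v = 0 := by
  simp only [pathGraph_adj, Fin.val_zero, Fin.val_succ, Fin.ext_iff]
  omega

lemma isProperColoring_pathGraph_succ_iff {f : Fin (n + 2) → α} :
    (pathGraph (n + 2)).IsProperColoring f ↔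
      f 0 ≠ f 1 ∧ (pathGraph (n + 1)).IsProperColoring (Fin.tail f) := by
  constructor
  · intro h
    exact ⟨h (pathGraph_adj_zero_succ.2 rfl), fun u v huv => h (pathGraph_adj_succ_succ.2 huv)⟩
  · rintro ⟨h01, htail⟩ u v huv
    induction u using Fin.cases <;> induction v using Fin.cases
    · exact (huv.ne rfl).elim
    · obtain rfl := pathGraph_adj_zero_succ.1 huv
      exact h01
    · obtain rfl := pathGraph_adj_zero_succ.1 huv.symm
      exact h01.symm
    · exact htail (pathGraph_adj_succ_succ.1 huv)

variable (n α)

def SurjColoring.pathGraphTailSurjectiveEquiv :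
    {f : (pathGraph (n + 2)).SurjColoring α // Surjective (Fin.tail f.1)} ≃
      Σ g : (pathGraph (n + 1)).SurjColoring α, {a // a ≠ g.1 0} where
  toFun f := ⟨⟨Fin.tail f.1.1, f.2, (isProperColoring_pathGraph_succ_iff.1 f.1.2.2).2⟩,
    ⟨f.1.1 0, (isProperColoring_pathGraph_succ_iff.1 f.1.2.2).1⟩⟩
  invFun g := ⟨⟨Fin.cons g.2.1 g.1.1, fun c => let ⟨i, hi⟩ := g.1.2.1 c; ⟨i.succ, hi⟩,
    isProperColoring_pathGraph_succ_iff.2 ⟨g.2.2, g.1.2.2⟩⟩, g.1.2.1⟩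
  left_inv _ := Subtype.ext <| Subtype.ext <| Fin.cons_self_tail _
  right_inv _ := rfl

def SurjColoring.pathGraphTailNotSurjectiveEquiv :
    {f : (pathGraph (n + 2)).SurjColoring α // ¬Surjective (Fin.tail f.1)} ≃
      Σ a : α, (pathGraph (n + 1)).SurjColoring {c // c ≠ a} where
  toFun f :=
    have hrange := Fin.range_tail_eq_compl f.1.2.1 f.2
    ⟨f.1.1 0,
      fun i => ⟨Fin.tail f.1.1 i, (hrange ▸ Set.mem_range_self i : _ ∈ ({f.1.1 0}ᶜ : Set α))⟩,
      fun c => by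
        obtain ⟨i, hi⟩ : c.1 ∈ Set.range (Fin.tail f.1.1) := hrange ▸ c.2
        exact ⟨i, Subtype.ext hi⟩,
      (isProperColoring_comp_iff Subtype.val_injective).1
        (isProperColoring_pathGraph_succ_iff.1 f.1.2.2).2⟩
  invFun g := ⟨⟨Fin.cons g.1 (Subtype.val ∘ g.2.1),
    fun c => by
      by_cases hc : c = g.1
      · exact ⟨0, hc.symm⟩
      · obtain ⟨i, hi⟩ := g.2.2.1 ⟨c, hc⟩
        exact ⟨i.succ, congrArg Subtype.val hi⟩,
    isProperColoring_pathGraph_succ_iff.2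
      ⟨(g.2.1 0).2.symm, (isProperColoring_comp_iff Subtype.val_injective).2 g.2.2.2⟩⟩,
    fun h => let ⟨i, hi⟩ := h g.1; (g.2.1 i).2 hi⟩
  left_inv _ := Subtype.ext <| Subtype.ext <| Fin.cons_self_tail _
  right_inv _ := rfl

def SurjColoring.pathGraphEndsEqEquiv :
    {f : (pathGraph (n + 3)).SurjColoring α // f.1 0 = f.1 (Fin.last (n + 2))} ≃
      (cycleGraph (n + 2)).SurjColoring α where
  toFun f := ⟨Fin.tail f.1.1, by
      rw [Fin.surjective_tail_iff f.1.2.1, f.2]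
      exact ⟨Fin.last (n + 1), rfl⟩,
    isProperColoring_cycleGraph_iff.2 ⟨(isProperColoring_pathGraph_succ_iff.1 f.1.2.2).2,
      fun h => (isProperColoring_pathGraph_succ_iff.1 f.1.2.2).1 (f.2.trans h.symm)⟩⟩
  invFun g := ⟨⟨Fin.cons (g.1 (Fin.last (n + 1))) g.1,
    fun c => let ⟨i, hi⟩ := g.2.1 c; ⟨i.succ, hi⟩,
    isProperColoring_pathGraph_succ_iff.2 ⟨(isProperColoring_cycleGraph_iff.1 g.2.2).2.symm,
      (isProperColoring_cycleGraph_iff.1 g.2.2).1⟩⟩, rfl⟩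
  left_inv f := Subtype.ext <| Subtype.ext <| by
    conv_rhs => rw [← Fin.cons_self_tail f.1.1]
    exact congrArg (fun a => Fin.cons a (Fin.tail f.1.1)) f.2.symm
  right_inv _ := rfl

def SurjColoring.pathGraphEndsNeEquiv :
    {f : (pathGraph (n + 2)).SurjColoring α // f.1 0 ≠ f.1 (Fin.last (n + 1))} ≃
      (cycleGraph (n + 2)).SurjColoring α :=
  (Equiv.subtypeSubtypeEquivSubtypeInter
    (fun f => Surjective f ∧ (pathGraph (n + 2)).IsProperColoring f)
    (fun f => f 0 ≠ f (Fin.last (n + 1)))).trans <| Equiv.subtypeEquivRight fun f => by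
    rw [isProperColoring_cycleGraph_iff, and_assoc]

variable [Finite α]

lemma card_surjColoring_pathGraph_eq_add :
    Nat.card ((pathGraph (n + 3)).SurjColoring α) =
      Nat.card ((cycleGraph (n + 3)).SurjColoring α) +
        Nat.card ((cycleGraph (n + 2)).SurjColoring α) := by
  classical
  rw [← Nat.card_congr (Equiv.sumCompl fun f => f.1 0 = f.1 (Fin.last (n + 2))), Nat.card_sum,
    Nat.card_congr (SurjColoring.pathGraphEndsEqEquiv n α),
    Nat.card_congr (SurjColoring.pathGraphEndsNeEquiv (n + 1) α), add_comm]

lemma card_surjColoring_pathGraph_succ :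
    Nat.card ((pathGraph (n + 2)).SurjColoring α) =
      Nat.card ((pathGraph (n + 1)).SurjColoring α) * (Nat.card α - 1) +
        Nat.card α * Nat.card ((pathGraph (n + 1)).SurjColoring (Fin (Nat.card α - 1))) := by
  classical
  have := Fintype.ofFinite α
  have := Fintype.ofFinite ((pathGraph (n + 1)).SurjColoring α)
  have hcolors (a : α) : Nat.card ((pathGraph (n + 1)).SurjColoring {c // c ≠ a}) =
      Nat.card ((pathGraph (n + 1)).SurjColoring (Fin (Nat.card α - 1))) :=
    Nat.card_congr <| SurjColoring.congr _ <| Finite.equivFinOfCardEq (Nat.card_subtype_ne a)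
  rw [← Nat.card_congr (Equiv.sumCompl fun f => Surjective (Fin.tail f.1)), Nat.card_sum,
    Nat.card_congr (SurjColoring.pathGraphTailSurjectiveEquiv n α),
    Nat.card_congr (SurjColoring.pathGraphTailNotSurjectiveEquiv n α),
    Nat.card_sigma, Nat.card_sigma]
  simp only [Nat.card_subtype_ne, hcolors, sum_const, card_univ, smul_eq_mul,
    ← Nat.card_eq_fintype_card]

end PathCycle

lemma card_surjColoring_pathGraph_one (k : ℕ) :
    Nat.card ((pathGraph 1).SurjColoring (Fin (k + 1))) = if k = 0 then 1 else 0 := by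
  rcases k with _ | k
  · show Nat.card ((pathGraph 1).SurjColoring (Fin 1)) = 1
    rw [Nat.card_eq_one_iff_exists]
    exact ⟨⟨fun _ => 0, fun c => ⟨0, Subsingleton.elim _ _⟩,
      fun u v huv => (huv.ne (Subsingleton.elim u v)).elim⟩,
      fun f => Subtype.ext (Subsingleton.elim _ _)⟩
  · rw [if_neg k.succ_ne_zero, Nat.card_eq_zero]
    refine .inl ⟨fun f => ?_⟩
    have := Fintype.card_le_of_surjective _ f.2.1
    simp at this

lemma card_surjColoring_pathGraph (n k : ℕ) :
    Nat.card ((pathGraph (n + 1)).SurjColoring (Fin (k + 1))) = (k + 1)! * stirling2 n k := by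
  induction n generalizing k with
  | zero => cases k <;> simp [card_surjColoring_pathGraph_one, stirling2]
  | succ n ih =>
    rw [card_surjColoring_pathGraph_succ, Nat.card_fin, Nat.add_sub_cancel, ih]
    cases k with
    | zero => simp [stirling2]
    | succ k =>
      rw [ih, stirling2, Nat.factorial_succ (k + 1)]
      ring

lemma card_surjColoring_pathGraph_of_two_le {m : ℕ} (hm : 2 ≤ m) (k : ℕ) :
    Nat.card ((pathGraph m).SurjColoring (Fin k)) = k ! * stirling2 (m - 1) (k - 1) := by
  obtain ⟨m, rfl⟩ := Nat.exists_eq_add_of_le' hm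
  cases k with
  | zero => simp [stirling2]
  | succ k => exact card_surjColoring_pathGraph (m + 1) k

end SimpleGraph

lemma eq_sum_range_alternating_of_add_eq {a c : ℕ → ℤ} (h₂ : c 2 = a 2)
    (h : ∀ m ≥ 2, c (m + 1) + c m = a (m + 1)) {n : ℕ} (hn : 2 ≤ n) :
    c n = ∑ i ∈ range (n - 1), (-1) ^ i * a (n - i) := by
  induction n, hn using Nat.le_induction with
  | base => simp [h₂]
  | succ m hm ih =>
    obtain ⟨m, rfl⟩ := Nat.exists_eq_add_of_le' hm
    rw [eq_sub_of_add_eq (h _ hm), ih, Nat.add_sub_cancel, sum_range_succ']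
    simp [pow_succ, sum_neg_distrib]
    ring

theorem cycle_graphStirling_alternating_sum (n : ℕ) (hn : 2 ≤ n) (k : ℕ) :
    (graphStirling (SimpleGraph.cycleGraph n) k : ℤ) =
      ∑ i ∈ Finset.range (n - 1), (-1 : ℤ) ^ i * (stirling2 (n - 1 - i) (k - 1) : ℤ) := by
  have hcycle := eq_sum_range_alternating_of_add_eq
    (a := fun m => (Nat.card ((pathGraph m).SurjColoring (Fin k)) : ℤ))
    (c := fun m => (Nat.card ((cycleGraph m).SurjColoring (Fin k)) : ℤ))
    (by rw [cycleGraph_two_eq_top, ← pathGraph_two_eq_top])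
    (fun m hm => by
      obtain ⟨m, rfl⟩ := Nat.exists_eq_add_of_le' hm
      exact_mod_cast (card_surjColoring_pathGraph_eq_add m (Fin k)).symm) hn
  refine mul_left_cancel₀ (by positivity : (k ! : ℤ) ≠ 0) ?_
  rw [← Nat.cast_mul, ← card_surjColoring_fin, hcycle, mul_sum]
  refine sum_congr rfl fun i hi => ?_
  rw [card_surjColoring_pathGraph_of_two_le (by grind), Nat.sub_right_comm]
  push_cast
  ring
end
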